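/- arXiv:2112.15259 — 5 statements merged into one kernel-verified Lean document; each statement's English description precedes it below -/
import Mathlib

section
/- In the double-collect validation scheme, if a reader's two reads of the version counter return the same even value v, then every memory read the reader performed between the two version reads observed the state of the protected data as it was throughout the interval, i.e., the data was unchanged during the interval. -/
lemma dc_mono (c : ℕ → ℕ) (hstep : ∀ t, c t ≤ c (t + 1) ∧ c (t + 1) ≤ c t + 1) :
    Monotone c :=
  monotone_nat_of_le_succ fun n => (hstep n).1

/-- Double-collect validation. A single writer maintains data (a family of
pieces indexed by `ι`, with values in `β`) together with a version counter
`c`. The data goes through states `s 0, s 1, ...`; the protocol guarantees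
that whenever the counter is even and equal to `2*i`, the data equals state
`s i` (the counter is odd while the data is being changed). The counter
changes only by unit increments.

If a reader reads the counter at time `t1` getting the even value `2*i`,
then reads pieces of the data at various times in `[t1, t2]`, and reads the
counter again at time `t2` getting the same value `2*i`, then every piece it
read equals the corresponding piece of state `s i`, i.e. the data was
unchanged (equal to `s i`) throughout the interval. -/
theorem double_collect_reads_consistent_state {ι β : Type}
    (c : ℕ → ℕ) (d : ℕ → ι → β) (s : ℕ → ι → β)
    (hstep : ∀ t, c t ≤ c (t + 1) ∧ c (t + 1) ≤ c t + 1)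
    (hinv : ∀ t i, c t = 2 * i → d t = s i)
    (i t1 t2 : ℕ) (h12 : t1 ≤ t2)
    (hc1 : c t1 = 2 * i) (hc2 : c t2 = 2 * i) :
    ∀ t, t1 ≤ t → t ≤ t2 → ∀ j : ι, d t j = s i j := by
  intro t ht1 ht2 j
  have hmono := dc_mono c hstep
  have h1 : c t1 ≤ c t := hmono ht1
  have h2 : c t ≤ c t2 := hmono ht2
  have : c t = 2 * i := le_antisymm (hc2 ▸ h2) (hc1 ▸ h1)
  rw [hinv t i this]
end

section
/- In a sequence of dictionary operations on a single key k, any maximal collection of concurrent insert(k) and delete(k) operations overlapping a linearized simple insert O of k can all be linearized without modifying the abstract set: each overlapping delete is placed immediately before O (returning ⊥, since k is absent just before O), and each overlapping insert is placed immediately after O (returning the value inserted by O, since k is present). The resulting sequential history is a legal dictionary history. -/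
/-- Dictionary operations on a single fixed key `k` (values of type `V`). -/
inductive DictOp (V : Type) : Type where
  | ins : V → DictOp V  -- insert(k, v)
  | del : DictOp V      -- delete(k)

namespace DictOp

variable {V : Type}

/-- The abstract state is the value currently associated with key `k`
(`none` if `k` is absent). `apply σ o = (σ', ret)`: insert returns the
existing value if present (no change), else adds the value and returns `⊥`;
delete removes the key and returns its value if present, else returns `⊥`. -/
def apply (σ : Option V) : DictOp V → Option V × Option V
  | .ins v =>
    match σ with
    | some w => (some w, some w)
    | none => (some v, none)
  | .del =>
    match σ with
    | some w => (none, some w)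
    | none => (none, none)

/-- `Legal σ h σ'`: the sequential history `h` (a list of operations paired
with their return values) is legal from abstract state `σ` and ends in state
`σ'`: each operation's effect and return value match the dictionary
semantics applied to the evolving state. -/
def Legal (σ : Option V) : List (DictOp V × Option V) → Option V → Prop
  | [], σ' => σ = σ'
  | (o, r) :: rest, σ' => (apply σ o).2 = r ∧ Legal (apply σ o).1 rest σ'

end DictOp

variable {V : Type}

lemma dels (m : ℕ) (rest : List (DictOp V × Option V)) (σ' : Option V)
    (h : DictOp.Legal (none : Option V) rest σ') :
    DictOp.Legal (none : Option V)
      (List.replicate m ((DictOp.del : DictOp V), (none : Option V)) ++ rest) σ' := by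
  induction m with
  | zero => simpa
  | succ n ih => simpa [List.replicate_succ, DictOp.Legal, DictOp.apply] using ih

lemma inss (v : V) (l : List V) :
    DictOp.Legal (some v) (l.map (fun v' => (DictOp.ins v', some v))) (some v) := by
  induction l with
  | nil => rfl
  | cons a t ih => simpa [DictOp.Legal, DictOp.apply] using ih

/-- Publishing elimination around a simple insert: starting from a state
where `k` is absent, linearize all `m` concurrent deletes of `k` immediately
before the successful insert `O = insert(k, v)` (each returning `⊥`), then
`O` (returning `⊥`), then all concurrent inserts `insert(k, v')` immediately
after `O` (each returning the value `v` inserted by `O`). The resulting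
sequential history is a legal dictionary history, none of the eliminated
operations changes the abstract set, and the final state is `S ∪ {k}` (key
`k` present with value `v`). -/
theorem eliminate_around_simple_insert {V : Type} (v : V) (m : ℕ)
    (extraInserts : List V) :
    DictOp.Legal (none : Option V)
      (List.replicate m ((DictOp.del : DictOp V), (none : Option V)) ++
        [(DictOp.ins v, none)] ++
        extraInserts.map (fun v' => (DictOp.ins v', some v)))
      (some v) := by
  rw [List.append_assoc]
  exact dels m _ _ (by simpa [DictOp.Legal, DictOp.apply] using inss v extraInserts)
end

section
/- Symmetrically, around a linearized successful delete O of key k: overlapping insert(k,·) operations linearized immediately before O each return the current value of k (the value O deletes), and overlapping delete(k) operations linearized immediately after O each return ⊥; the resulting sequential history is legal and leaves the abstract set equal to S \ {k}. -/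
/-- Publishing elimination around a successful delete: starting from a state
where `(k, v)` is present, linearize all concurrent inserts `insert(k, v')`
immediately before the successful delete `O = delete(k)` (each returning the
current value `v` of `k` — the value `O` deletes), then `O` (returning `v`),
then all `m` concurrent deletes immediately after `O` (each returning `⊥`).
The resulting sequential history is legal and the final abstract state is
`S \ {k}` (key `k` absent). -/
theorem eliminate_around_successful_delete {V : Type} (v : V) (m : ℕ)
    (extraInserts : List V) :
    DictOp.Legal (some v)
      (extraInserts.map (fun v' => (DictOp.ins v', some v)) ++
        [((DictOp.del : DictOp V), some v)] ++
        List.replicate m ((DictOp.del : DictOp V), (none : Option V)))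
      (none : Option V) := by
  induction extraInserts with
  | nil =>
    simp only [List.map_nil, List.nil_append, List.singleton_append]
    refine ⟨rfl, ?_⟩
    induction m with
    | zero => rfl
    | succ n ih => exact ⟨rfl, ih⟩
  | cons a t ih => exact ⟨rfl, ih⟩
end

section
/- In the lockOrElim snapshot loop, if the loop exits with ver1 = ver2 both even, then the elimination record rec read between the two version reads was the record present whenever the leaf's version equalled ver1; moreover ver2 ≥ rec.ver + 1, i.e., the operation that published rec had completed (incremented the version to an even value greater than rec.ver) by the time of the second version read. -/
/-- The `lockOrElim` snapshot loop. A leaf has a version `v` (initially even,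
changed only by unit increments) and an elimination-record field `rec` (of
abstract type `R` with a version projection `ver`). The writer protocol
guarantees: the record's version is always odd and at most the current leaf
version (`hrec`), and the record field is only written immediately after the
leaf version has been incremented to an odd value (`hchange`).

Suppose a reader reads the version at time `t1`, reads the record at time
`t ∈ [t1, t2]`, and re-reads the version at time `t2`, exiting the loop
because both version reads returned the same even value. Then:
(1) the record it read is consistent — it equals the record present at
*every* time at which the leaf version equals `ver1` (so it was published by
a writer whose modification completed, with second increment, at a value
`≤ ver1`); (2) the record's version is odd; and (3) `ver2 ≥ rec.ver + 1`,
i.e. the publishing operation had completed by the second version read. -/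
theorem lockOrElim_snapshot_consistent {R : Type}
    (v : ℕ → ℕ) (rec : ℕ → R) (ver : R → ℕ)
    (hstep : ∀ t, v t ≤ v (t + 1) ∧ v (t + 1) ≤ v t + 1)
    (hrec : ∀ t, Odd (ver (rec t)) ∧ ver (rec t) ≤ v t)
    (hchange : ∀ t, rec (t + 1) ≠ rec t → Odd (v (t + 1)))
    (t1 t t2 : ℕ) (h1 : t1 ≤ t) (h2 : t ≤ t2)
    (heven : Even (v t1)) (heq : v t1 = v t2) :
    (∀ t', v t' = v t1 → rec t' = rec t) ∧
      Odd (ver (rec t)) ∧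
      ver (rec t) + 1 ≤ v t2 := by

  have mono : Monotone v := monotone_nat_of_le_succ fun n => (hstep n).1
  -- rec is constant on the level set of v t1
  have key : ∀ a b, a ≤ b → v a = v t1 → v b = v t1 → rec a = rec b := by
    intro a b hab ha hb
    induction b, hab using Nat.le_induction with
    | base => rfl
    | succ b hab ih =>
      have hvb : v b = v t1 := le_antisymm (hb ▸ mono (Nat.le_succ b)) (ha ▸ mono hab)
      have hstep' : rec (b + 1) = rec b := by
        by_contra h
        have := hchange b h
        rw [hb] at this
        exact (Nat.not_odd_iff_even.mpr heven) this
      rw [hstep', ih hvb]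
  have hvt : v t = v t1 := le_antisymm (heq ▸ mono h2) (mono h1)
  refine ⟨fun t' ht' => ?_, (hrec t).1, ?_⟩
  · rcases le_total t' t with h | h
    · exact key t' t h ht' hvt
    · exact (key t t' h hvt ht').symm
  · have hle : ver (rec t) ≤ v t1 := hvt ▸ (hrec t).2
    have hne : ver (rec t) ≠ v t1 := fun h => (Nat.not_odd_iff_even.mpr heven) (h ▸ (hrec t).1)
    omega
end

section
/- Locality of strict linearizability with respect to crash-delimited eras: if an execution is partitioned into consecutive fragments (era of operations, crash, recovery), and each fragment is strictly linearizable with matching abstract start/end states, then the concatenated execution is strictly linearizable. -/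
/-- An operation record: the operation together with its invocation and
response (or crash/cut) times. -/
structure OpRec (Op : Type) where
  op : Op
  inv : ℕ
  res : ℕ

variable {S Op : Type}

/-- Run a sequential list of operations from a state. -/
def runOps (step : S → Op → S) (s : S) (w : List (OpRec Op)) : S :=
  w.foldl (fun s o => step s o.op) s

/-- `StrictLin step completed H s s'`: the history fragment `H` is strictly
linearizable from abstract state `s` to abstract state `s'`: there is a
sequential witness `w` consisting of (some of) the operations of `H`,
containing every completed operation (operations pending at a crash either
appear or are removed), ordered consistently with the real-time order
(an operation responding before another is invoked is never placed after
it), whose sequential execution takes `s` to `s'`. -/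
def StrictLin (step : S → Op → S) (completed : OpRec Op → Prop)
    (H : List (OpRec Op)) (s s' : S) : Prop :=
  ∃ w : List (OpRec Op),
    w.Subperm H ∧
    (∀ o ∈ H, completed o → o ∈ w) ∧
    w.Pairwise (fun o1 o2 => ¬ o2.res < o1.inv) ∧
    runOps step s w = s'

/-- Locality of strict linearizability with respect to crash-delimited eras:
if an execution is partitioned into consecutive fragments `F 0, …, F (n-1)`
(eras separated by crashes and recoveries, so every operation of an earlier
fragment responds before every operation of a later fragment is invoked),
and each fragment `F i` is strictly linearizable from abstract state `σ i`
to `σ (i+1)` (matching start/end states), then the concatenated execution is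
strictly linearizable from `σ 0` to `σ n`. -/
theorem strictLin_concat (step : S → Op → S) (completed : OpRec Op → Prop)
    (n : ℕ) (F : ℕ → List (OpRec Op)) (σ : ℕ → S)
    (hinvres : ∀ i < n, ∀ o ∈ F i, o.inv ≤ o.res)
    (hsep : ∀ i j, i < j → j < n →
      ∀ o1 ∈ F i, ∀ o2 ∈ F j, o1.res < o2.inv)
    (hlin : ∀ i < n, StrictLin step completed (F i) (σ i) (σ (i + 1))) :
    StrictLin step completed ((List.range n).flatMap F) (σ 0) (σ n) := by
  induction n with
  | zero => exact ⟨[], by simp, by simp, List.Pairwise.nil, rfl⟩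
  | succ n ih =>
    obtain ⟨w, hw1, hw2, hw3, hw4⟩ :=
      ih (fun i hi => hinvres i (hi.trans n.lt_succ_self))
        (fun i j hij hj => hsep i j hij (hj.trans n.lt_succ_self))
        (fun i hi => hlin i (hi.trans n.lt_succ_self))
    obtain ⟨v, hv1, hv2, hv3, hv4⟩ := hlin n n.lt_succ_self
    refine ⟨w ++ v, ?_, ?_, ?_, ?_⟩
    · rw [List.range_succ, List.flatMap_append]
      obtain ⟨l1, p1, s1⟩ := hw1
      obtain ⟨l2, p2, s2⟩ := hv1
      exact ⟨l1 ++ l2, p1.append p2, by simpa using s1.append s2⟩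
    · intro o ho hc
      rw [List.range_succ, List.flatMap_append] at ho
      simp only [List.mem_append, List.flatMap_singleton] at ho ⊢
      rcases ho with ho | ho
      · exact Or.inl (hw2 o ho hc)
      · exact Or.inr (hv2 o ho hc)
    · refine List.pairwise_append.2 ⟨hw3, hv3, ?_⟩
      intro o1 h1 o2 h2
      obtain ⟨i, hi, hoi⟩ := List.mem_flatMap.1 (hw1.subset h1)
      have hi' := List.mem_range.1 hi
      have h2' := hv1.subset h2
      have hsep' := hsep i n hi' n.lt_succ_self o1 hoi o2 h2'
      have h1r := hinvres i (hi'.trans n.lt_succ_self) o1 hoi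
      have h2r := hinvres n n.lt_succ_self o2 h2'
      omega
    · rw [runOps, List.foldl_append]
      rw [runOps] at hw4 hv4
      rw [hw4]
      exact hv4
end
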